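/- Let S be a closed connected subset of the unit sphere S^{n-1} in R^n that is Lipschitz normally embedded with LNE constant L (i.e., the inner distance in S is at most L times the Euclidean distance, for all pairs of points of S). Then the non-negative cone over S with vertex the origin, defined as the union of all rays from the origin through points of S, is Lipschitz normally embedded with LNE constant at most 2L+1. -/

import Mathlib

/-!
Write the two points as `t • u` and `s • v` with `u, v ∈ S` and `0 ≤ t ≤ s`. Inside the cone, go
from `t • u` to `t • v` along `t` times a near-optimal path of `S` (length `≤ t L ‖u - v‖`), then
radially from `t • v` to `s • v` (length `s - t`). For unit vectors `u, v` one has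
`s - t ≤ ‖t • u - s • v‖`, hence `t ‖u - v‖ ≤ ‖t • u - s • v‖ + (s - t) ≤ 2 ‖t • u - s • v‖`,
and the two lengths add up to at most `(2 L + 1) ‖t • u - s • v‖`.
-/

open scoped ENNReal

/-- Length of a path `γ : ℝ → E` over `[0,1]`, as total variation. -/
noncomputable def pathLength {E : Type*} [PseudoEMetricSpace E] (γ : ℝ → E) : ℝ≥0∞ :=
  eVariationOn γ (Set.Icc 0 1)

/-- Inner distance in `S`: infimum of lengths of paths in `S` joining `x` and `y`. -/
noncomputable def innerDist {E : Type*} [PseudoEMetricSpace E] (S : Set E) (x y : E) : ℝ≥0∞ :=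
  ⨅ (γ : ℝ → E) (_ : ContinuousOn γ (Set.Icc 0 1)) (_ : γ 0 = x) (_ : γ 1 = y)
    (_ : γ '' Set.Icc 0 1 ⊆ S), pathLength γ

/-- `S` is LNE with constant `L`. -/
def IsLNEWith {E : Type*} [NormedAddCommGroup E] (L : ℝ) (S : Set E) : Prop :=
  ∀ x ∈ S, ∀ y ∈ S, innerDist S x y ≤ ENNReal.ofReal (L * dist x y)

/-- `S` is Lipschitz normally embedded. -/
def IsLNE {E : Type*} [NormedAddCommGroup E] (S : Set E) : Prop :=
  ∃ L > 0, IsLNEWith L S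

/-- The non-negative cone over `S` with vertex the origin. -/
def nonnegCone {n : ℕ} (S : Set (EuclideanSpace ℝ (Fin n))) : Set (EuclideanSpace ℝ (Fin n)) :=
  {x | ∃ t : ℝ, 0 ≤ t ∧ ∃ u ∈ S, x = t • u}

open Set

theorem image_two_mul_Icc_zero_half : (fun r : ℝ => 2 * r) '' Icc 0 (1 / 2) = Icc 0 1 := by
  rw [image_mul_left_Icc zero_le_two (by norm_num)]; norm_num

theorem image_two_mul_sub_one_Icc_half_one :
    (fun r : ℝ => 2 * r - 1) '' Icc (1 / 2) 1 = Icc 0 1 := by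
  have : (fun r : ℝ => 2 * r - 1) = (fun r => r - 1) ∘ fun r => 2 * r := rfl
  rw [this, image_comp, image_mul_left_Icc zero_le_two (by norm_num), image_sub_const_Icc]
  norm_num

theorem Icc_zero_one_eq_union_half : Icc (0 : ℝ) 1 = Icc 0 (1 / 2) ∪ Icc (1 / 2) 1 :=
  (Icc_union_Icc_eq_Icc (by norm_num) (by norm_num)).symm

section Concat

variable {E : Type*}

noncomputable def pathConcat (γ₁ γ₂ : ℝ → E) (r : ℝ) : E :=
  if r ≤ 1 / 2 then γ₁ (2 * r) else γ₂ (2 * r - 1)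

theorem pathConcat_eqOn_left (γ₁ γ₂ : ℝ → E) :
    EqOn (pathConcat γ₁ γ₂) (γ₁ ∘ fun r => 2 * r) (Icc 0 (1 / 2)) := fun _ hr =>
  if_pos hr.2

theorem pathConcat_eqOn_right {γ₁ γ₂ : ℝ → E} (h : γ₁ 1 = γ₂ 0) :
    EqOn (pathConcat γ₁ γ₂) (γ₂ ∘ fun r => 2 * r - 1) (Icc (1 / 2) 1) := by
  intro r hr
  rcases hr.1.eq_or_lt with rfl | hr'
  · simp [pathConcat, h]
  · exact if_neg hr'.not_ge

theorem image_pathConcat {γ₁ γ₂ : ℝ → E} (h : γ₁ 1 = γ₂ 0) :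
    pathConcat γ₁ γ₂ '' Icc 0 1 = γ₁ '' Icc 0 1 ∪ γ₂ '' Icc 0 1 := by
  conv_lhs => rw [Icc_zero_one_eq_union_half]
  rw [image_union, (pathConcat_eqOn_left γ₁ γ₂).image_eq,
    (pathConcat_eqOn_right h).image_eq, image_comp, image_comp, image_two_mul_Icc_zero_half,
    image_two_mul_sub_one_Icc_half_one]

end Concat

section PseudoEMetric

variable {E : Type*} [PseudoEMetricSpace E]

theorem innerDist_le_pathLength {S : Set E} {x y : E} (γ : ℝ → E) (hγ : ContinuousOn γ (Icc 0 1))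
    (h0 : γ 0 = x) (h1 : γ 1 = y) (hS : γ '' Icc 0 1 ⊆ S) : innerDist S x y ≤ pathLength γ :=
  iInf_le_of_le γ <| iInf_le_of_le hγ <| iInf_le_of_le h0 <| iInf_le_of_le h1 <| iInf_le _ hS

theorem innerDist_self {S : Set E} {x : E} (hx : x ∈ S) : innerDist S x x = 0 := by
  refine le_antisymm ?_ zero_le
  refine (innerDist_le_pathLength (fun _ => x) continuousOn_const rfl rfl ?_).trans_eq ?_
  · rintro _ ⟨_, _, rfl⟩
    exact hx
  · exact eVariationOn.constant_on (subsingleton_singleton.anti (image_subset_iff.2 fun _ _ => rfl))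

theorem innerDist_le_innerDist_swap (S : Set E) (x y : E) : innerDist S x y ≤ innerDist S y x := by
  refine le_iInf fun γ => le_iInf fun hγ => le_iInf fun h0 => le_iInf fun h1 => le_iInf fun hS => ?_
  have hrev : (fun r : ℝ => 1 - r) '' Icc 0 1 = Icc 0 1 := by
    rw [image_const_sub_Icc]; norm_num
  have hanti : AntitoneOn (fun r : ℝ => 1 - r) (Icc 0 1) := fun a _ b _ hab => by
    simp only; linarith
  refine (innerDist_le_pathLength (γ ∘ fun r => 1 - r) ?_ (by simp [h1]) (by simp [h0]) ?_).trans_eq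
    ?_
  · exact hγ.comp (by fun_prop) ((mapsTo_image _ _).mono_right hrev.subset)
  · rwa [image_comp, hrev]
  · rw [pathLength, eVariationOn.comp_eq_of_antitoneOn γ _ hanti, hrev, pathLength]

theorem innerDist_comm (S : Set E) (x y : E) : innerDist S x y = innerDist S y x :=
  (innerDist_le_innerDist_swap S x y).antisymm (innerDist_le_innerDist_swap S y x)

theorem LipschitzOnWith.innerDist_le {F : Type*} [EMetricSpace F] {K : NNReal} {f : E → F}
    {S : Set E} {T : Set F} {x y : E}
    (hf : LipschitzOnWith K f S) (hST : MapsTo f S T) (hx : x ∈ S) (hy : y ∈ S) :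
    innerDist T (f x) (f y) ≤ K * innerDist S x y := by
  rcases eq_or_ne K 0 with rfl | hK
  · have hxy : f x = f y := by simpa using hf hx hy
    rw [hxy, innerDist_self (hST hy), ENNReal.coe_zero, zero_mul]
  simp only [innerDist, ENNReal.mul_iInf_of_ne (ENNReal.coe_ne_zero.2 hK) ENNReal.coe_ne_top]
  refine le_iInf fun γ => le_iInf fun hγ => le_iInf fun h0 => le_iInf fun h1 => le_iInf fun hS => ?_
  refine (innerDist_le_pathLength (f ∘ γ) ?_ (by simp [h0]) (by simp [h1]) ?_).trans ?_
  · exact hf.continuousOn.comp hγ (image_subset_iff.1 hS)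
  · rw [image_comp]; exact (hST.mono_left hS).image_subset
  · exact hf.comp_eVariationOn_le (image_subset_iff.1 hS)

theorem ContinuousOn.pathConcat {γ₁ γ₂ : ℝ → E} (h₁ : ContinuousOn γ₁ (Icc 0 1))
    (h₂ : ContinuousOn γ₂ (Icc 0 1)) (h : γ₁ 1 = γ₂ 0) :
    ContinuousOn (pathConcat γ₁ γ₂) (Icc 0 1) := by
  rw [Icc_zero_one_eq_union_half]
  refine ContinuousOn.union_of_isClosed ?_ ?_ isClosed_Icc isClosed_Icc
  · refine ContinuousOn.congr ?_ (pathConcat_eqOn_left γ₁ γ₂)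
    exact h₁.comp (by fun_prop) (image_two_mul_Icc_zero_half ▸ mapsTo_image _ _)
  · refine ContinuousOn.congr ?_ (pathConcat_eqOn_right h)
    exact h₂.comp (by fun_prop) (image_two_mul_sub_one_Icc_half_one ▸ mapsTo_image _ _)

theorem pathLength_pathConcat {γ₁ γ₂ : ℝ → E} (h : γ₁ 1 = γ₂ 0) :
    pathLength (pathConcat γ₁ γ₂) = pathLength γ₁ + pathLength γ₂ := by
  have hmono₁ : MonotoneOn (fun r : ℝ => 2 * r) (Icc 0 (1 / 2)) := fun a _ b _ hab => by
    simp only; linarith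
  have hmono₂ : MonotoneOn (fun r : ℝ => 2 * r - 1) (Icc (1 / 2) 1) := fun a _ b _ hab => by
    simp only; linarith
  rw [pathLength, Icc_zero_one_eq_union_half,
    eVariationOn.union _ (isGreatest_Icc (by norm_num)) (isLeast_Icc (by norm_num)),
    eVariationOn.eq_of_eqOn (pathConcat_eqOn_left γ₁ γ₂),
    eVariationOn.eq_of_eqOn (pathConcat_eqOn_right h),
    eVariationOn.comp_eq_of_monotoneOn _ _ hmono₁, eVariationOn.comp_eq_of_monotoneOn _ _ hmono₂,
    image_two_mul_Icc_zero_half, image_two_mul_sub_one_Icc_half_one, pathLength, pathLength]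

theorem innerDist_triangle (S : Set E) (x y z : E) :
    innerDist S x z ≤ innerDist S x y + innerDist S y z := by
  conv_rhs => simp only [innerDist, ENNReal.iInf_add, ENNReal.add_iInf]
  refine le_iInf fun γ₂ => le_iInf fun hγ₂ => le_iInf fun h₂0 => le_iInf fun h₂1 =>
    le_iInf fun hS₂ => le_iInf fun γ₁ => le_iInf fun hγ₁ => le_iInf fun h₁0 => le_iInf fun h₁1 =>
    le_iInf fun hS₁ => ?_
  have h : γ₁ 1 = γ₂ 0 := h₁1.trans h₂0.symm
  rw [← pathLength_pathConcat h]
  refine innerDist_le_pathLength _ (hγ₁.pathConcat hγ₂ h) ?_ ?_ ?_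
  · simp [pathConcat, h₁0]
  · norm_num [pathConcat, h₂1]
  · rw [image_pathConcat h]; exact union_subset hS₁ hS₂

end PseudoEMetric

theorem innerDist_Icc_zero_one_le_one : innerDist (Icc (0 : ℝ) 1) 0 1 ≤ 1 := by
  refine (innerDist_le_pathLength id continuousOn_id rfl rfl (image_id _).subset).trans_eq ?_
  have h := (monotoneOn_id (s := univ)).eVariationOn_eq (mem_univ (0 : ℝ)) (mem_univ 1)
  rwa [univ_inter, id, id, sub_zero, ENNReal.ofReal_one] at h

section Normed

variable {E : Type*} [NormedAddCommGroup E] [NormedSpace ℝ E]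

theorem innerDist_le_edist_of_segment_subset {S : Set E} {x y : E} (h : segment ℝ x y ⊆ S) :
    innerDist S x y ≤ edist x y := by
  have hmaps : MapsTo (AffineMap.lineMap x y) (Icc (0 : ℝ) 1) S := fun r hr =>
    h (segment_eq_image_lineMap ℝ x y ▸ mem_image_of_mem _ hr)
  calc innerDist S x y
      = innerDist S (AffineMap.lineMap x y (0 : ℝ)) (AffineMap.lineMap x y (1 : ℝ)) := by simp
    _ ≤ nndist x y * innerDist (Icc (0 : ℝ) 1) 0 1 :=
        (lipschitzWith_lineMap x y).lipschitzOnWith.innerDist_le hmaps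
          ⟨le_rfl, zero_le_one⟩ ⟨zero_le_one, le_rfl⟩
    _ ≤ edist x y := by
        rw [edist_nndist]
        exact mul_le_of_le_one_right' innerDist_Icc_zero_one_le_one

theorem abs_sub_le_norm_smul_sub_smul {u v : E} (hu : ‖u‖ = 1) (hv : ‖v‖ = 1) {t s : ℝ}
    (ht : 0 ≤ t) (hs : 0 ≤ s) : |t - s| ≤ ‖t • u - s • v‖ := by
  simpa [norm_smul, hu, hv, abs_of_nonneg ht, abs_of_nonneg hs] using
    abs_norm_sub_norm_le (t • u) (s • v)

theorem mul_norm_sub_le_two_mul_norm_smul_sub_smul {u v : E} (hu : ‖u‖ = 1) (hv : ‖v‖ = 1)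
    {t s : ℝ} (ht : 0 ≤ t) (hts : t ≤ s) : t * ‖u - v‖ ≤ 2 * ‖t • u - s • v‖ := by
  have hsub := abs_sub_le_norm_smul_sub_smul hu hv ht (ht.trans hts)
  calc t * ‖u - v‖ = ‖t • u - t • v‖ := by rw [← smul_sub, norm_smul, Real.norm_of_nonneg ht]
    _ ≤ ‖t • u - s • v‖ + ‖s • v - t • v‖ := norm_sub_le_norm_sub_add_norm_sub _ _ _
    _ = ‖t • u - s • v‖ + |t - s| := by
        rw [← sub_smul, norm_smul, hv, mul_one, Real.norm_eq_abs, abs_sub_comm]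
    _ ≤ 2 * ‖t • u - s • v‖ := by linarith

end Normed

theorem innerDist_nonnegCone_smul_smul_le {n : ℕ} {S : Set (EuclideanSpace ℝ (Fin n))}
    {u v : EuclideanSpace ℝ (Fin n)} (hu : u ∈ S) (hv : v ∈ S) {t s : ℝ} (ht : 0 ≤ t) (hs : 0 ≤ s) :
    innerDist (nonnegCone S) (t • u) (s • v) ≤
      ENNReal.ofReal t * innerDist S u v + edist (t • v) (s • v) := by
  have hscale : MapsTo (t • ·) S (nonnegCone S) := fun w hw => ⟨t, ht, w, hw, rfl⟩
  have hray : segment ℝ (t • v) (s • v) ⊆ nonnegCone S := by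
    rintro _ ⟨a, b, ha, hb, -, rfl⟩
    exact ⟨a * t + b * s, by positivity, v, hv, by rw [add_smul, mul_smul, mul_smul]⟩
  calc innerDist (nonnegCone S) (t • u) (s • v)
      ≤ innerDist (nonnegCone S) (t • u) (t • v) + innerDist (nonnegCone S) (t • v) (s • v) :=
        innerDist_triangle _ _ _ _
    _ ≤ ENNReal.ofReal t * innerDist S u v + edist (t • v) (s • v) := by
        gcongr
        · rw [ENNReal.ofReal_eq_coe_nnreal ht, ← Real.nnnorm_of_nonneg ht]
          exact (lipschitzWith_smul t).lipschitzOnWith.innerDist_le hscale hu hv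
        · exact innerDist_le_edist_of_segment_subset hray

theorem cone_LNE_of_LNE_general {n : ℕ} (S : Set (EuclideanSpace ℝ (Fin n)))
    (hS : S ⊆ Metric.sphere (0 : EuclideanSpace ℝ (Fin n)) 1)
    (L : ℝ) (hL : 0 < L) (hLNE : IsLNEWith L S) :
    IsLNEWith (2 * L + 1) (nonnegCone S) := by
  rintro x ⟨t, ht, u, hu, rfl⟩ y ⟨s, hs, v, hv, rfl⟩
  wlog hts : t ≤ s generalizing t s u v
  · rw [innerDist_comm, dist_comm]
    exact this s hs v hv t ht u hu (le_of_not_ge hts)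
  have hu1 : ‖u‖ = 1 := by simpa using hS hu
  have hv1 : ‖v‖ = 1 := by simpa using hS hv
  have hradial := abs_sub_le_norm_smul_sub_smul hu1 hv1 ht hs
  have hangular := mul_norm_sub_le_two_mul_norm_smul_sub_smul hu1 hv1 ht hts
  calc innerDist (nonnegCone S) (t • u) (s • v)
      ≤ ENNReal.ofReal t * innerDist S u v + edist (t • v) (s • v) :=
        innerDist_nonnegCone_smul_smul_le hu hv ht hs
    _ ≤ ENNReal.ofReal t * ENNReal.ofReal (L * dist u v) + ENNReal.ofReal |t - s| := by
        gcongr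
        · exact hLNE u hu v hv
        · rw [edist_dist, dist_eq_norm, ← sub_smul, norm_smul, hv1, mul_one, Real.norm_eq_abs]
    _ = ENNReal.ofReal (t * (L * ‖u - v‖) + |t - s|) := by
        rw [← ENNReal.ofReal_mul ht, ← ENNReal.ofReal_add (by positivity) (abs_nonneg _),
          dist_eq_norm]
    _ ≤ ENNReal.ofReal ((2 * L + 1) * dist (t • u) (s • v)) := by
        rw [dist_eq_norm]
        gcongr
        linarith [mul_le_mul_of_nonneg_left hangular hL.le]

theorem cone_LNE_of_LNE {n : ℕ} (S : Set (EuclideanSpace ℝ (Fin n)))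
    (hS : S ⊆ Metric.sphere (0 : EuclideanSpace ℝ (Fin n)) 1)
    (hclosed : IsClosed S) (hconn : IsConnected S)
    (L : ℝ) (hL : 0 < L) (hLNE : IsLNEWith L S) :
    IsLNEWith (2 * L + 1) (nonnegCone S) :=
  cone_LNE_of_LNE_general S hS L hL hLNE
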